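/- (Itô isometry for Liouville fBm, case 0 < β < 1/2.) Let T > 0, let 0 < β < 1/2, and let (Ω, F, P) be a probability space carrying random variables W(t) ∈ L²(Ω), t ∈ [0,T], with E[W(t)] = 0 and E[W(s)W(t)] = Γ^β_{s,t} for all s,t ∈ [0,T]. Let N ∈ ℕ, let (a_j, b_j], j = 1,…,N, be pairwise disjoint subintervals of (0,T], let c_1,…,c_N ∈ ℝ, and set f := Σ_{j=1}^N c_j 1_{(a_j,b_j]}. Define g(s) := Γ(β+1/2)^{-1} Σ_{j=1}^N c_j [ (b_j - s)^{β-1/2} 1_{(0,b_j)}(s) − (a_j - s)^{β-1/2} 1_{(0,a_j)}(s) ] for s ∈ (0,T). Then g ∈ L²(0,T), the right Liouville fractional integral satisfies I_{T-}^{1/2-β} g = f almost everywhere on (0,T), and E| Σ_{j=1}^N c_j ( W(b_j) − W(a_j) ) |² = ‖g‖²_{L²(0,T)}. -/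

import Mathlib

open MeasureTheory Set
open scoped NNReal ENNReal

/-- The left Liouville fractional integral of order `α` on `(a,·)`:
`(I_{a+}^α f)(t) = Γ(α)⁻¹ ∫_a^t (t-s)^(α-1) f(s) ds`. -/
noncomputable def leftFrac (a α : ℝ) (f : ℝ → ℝ) : ℝ → ℝ :=
  fun t => (Real.Gamma α)⁻¹ * ∫ s in Ioo a t, (t - s) ^ (α - 1) * f s

/-- The right Liouville fractional integral of order `α` on `(·,b)`:
`(I_{b-}^α f)(t) = Γ(α)⁻¹ ∫_t^b (s-t)^(α-1) f(s) ds`. -/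
noncomputable def rightFrac (b α : ℝ) (f : ℝ → ℝ) : ℝ → ℝ :=
  fun t => (Real.Gamma α)⁻¹ * ∫ s in Ioo t b, (s - t) ^ (α - 1) * f s

/-- Lebesgue measure restricted to the interval `(a,b)`, modelling `L²(a,b)`. -/
noncomputable def msr (a b : ℝ) : Measure ℝ := volume.restrict (Ioo a b)

/-- The Liouville fBm covariance
`Γ^β_{s,t} = Γ(β+1/2)⁻² ∫_0^{s∧t} (s-u)^(β-1/2) (t-u)^(β-1/2) du`. -/
noncomputable def fbmCov (β s t : ℝ) : ℝ :=
  ((Real.Gamma (β + 1/2)) ^ 2)⁻¹ *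
    ∫ u in Ioo 0 (min s t), (s - u) ^ (β - 1/2) * (t - u) ^ (β - 1/2)

/-!
The covariance `Γ^β_{s,t}` is the `L²(0,T)` inner product of the Volterra kernels
`K_t(u) = Γ(β+1/2)⁻¹ (t-u)^(β-1/2) 1_{(0,t)}(u)`, and `g = ∑ c_j (K_{b_j} - K_{a_j})`, so both
sides of the isometry expand into the same combination of covariances. Applying `I_{T-}^{1/2-β}`
to `K_b` gives `1_{t<b}`, since the Beta integral `B(1/2-β, β+1/2)` equals
`Γ(1/2-β) Γ(β+1/2)`; hence `I_{T-}^{1/2-β} g` is the step function `f` away from the endpoints.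
-/

section SecondMoments

variable {α : Type*} [MeasurableSpace α] {μ : Measure α}

lemma integral_sub_mul_sub {f g h k : α → ℝ} (hf : MemLp f 2 μ) (hg : MemLp g 2 μ)
    (hh : MemLp h 2 μ) (hk : MemLp k 2 μ) :
    ∫ x, (f x - g x) * (h x - k x) ∂μ
      = ∫ x, f x * h x ∂μ - ∫ x, f x * k x ∂μ - ∫ x, g x * h x ∂μ + ∫ x, g x * k x ∂μ := by
  have expand : ∀ x, (f x - g x) * (h x - k x)
      = f x * h x - f x * k x - g x * h x + g x * k x := fun x => by ring
  have hfh : Integrable (fun x => f x * h x) μ := hf.integrable_mul hh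
  have hfk : Integrable (fun x => f x * k x) μ := hf.integrable_mul hk
  have hgh : Integrable (fun x => g x * h x) μ := hg.integrable_mul hh
  have hgk : Integrable (fun x => g x * k x) μ := hg.integrable_mul hk
  simp only [expand]
  rw [integral_add (f := fun x => f x * h x - f x * k x - g x * h x) ((hfh.sub hfk).sub hgh) hgk,
    integral_sub (f := fun x => f x * h x - f x * k x) (hfh.sub hfk) hgh, integral_sub hfh hfk]

lemma integral_sum_mul_sq {ι : Type*} [Fintype ι] {Z : ι → α → ℝ}
    (hZ : ∀ i, MemLp (Z i) 2 μ) (c : ι → ℝ) :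
    ∫ x, (∑ i, c i * Z i x) ^ 2 ∂μ = ∑ i, ∑ j, c i * c j * ∫ x, Z i x * Z j x ∂μ := by
  have expand : ∀ x, (∑ i, c i * Z i x) ^ 2 = ∑ i, ∑ j, c i * c j * (Z i x * Z j x) :=
    fun x => by rw [sq, Finset.sum_mul_sum]; simp only [mul_mul_mul_comm]
  have hint : ∀ i j, Integrable (fun x => c i * c j * (Z i x * Z j x)) μ :=
    fun i j => ((hZ i).integrable_mul (hZ j)).const_mul _
  simp only [expand]
  rw [integral_finsetSum _ fun i _ => integrable_finsetSum _ fun j _ => hint i j]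
  refine Finset.sum_congr rfl fun i _ => ?_
  rw [integral_finsetSum _ fun j _ => hint i j]
  simp only [integral_const_mul]

end SecondMoments

theorem integral_sq_sum_sub_eq_of_integral_mul_eq {κ ι α α' : Type*} [Fintype ι]
    [MeasurableSpace α] [MeasurableSpace α'] {μ : Measure α} {ν : Measure α'} {S : Set κ}
    {X : κ → α → ℝ} {Y : κ → α' → ℝ} (hX : ∀ s ∈ S, MemLp (X s) 2 μ)
    (hY : ∀ s ∈ S, MemLp (Y s) 2 ν)
    (hXY : ∀ s ∈ S, ∀ t ∈ S, ∫ x, X s x * X t x ∂μ = ∫ y, Y s y * Y t y ∂ν)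
    {a b : ι → κ} (ha : ∀ i, a i ∈ S) (hb : ∀ i, b i ∈ S) (c : ι → ℝ) :
    ∫ x, (∑ i, c i * (X (b i) x - X (a i) x)) ^ 2 ∂μ
      = ∫ y, (∑ i, c i * (Y (b i) y - Y (a i) y)) ^ 2 ∂ν := by
  rw [integral_sum_mul_sq (Z := fun i x => X (b i) x - X (a i) x)
      (fun i => (hX _ (hb i)).sub (hX _ (ha i))),
    integral_sum_mul_sq (Z := fun i y => Y (b i) y - Y (a i) y)
      (fun i => (hY _ (hb i)).sub (hY _ (ha i)))]
  refine Finset.sum_congr rfl fun i _ => Finset.sum_congr rfl fun j _ => ?_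
  rw [integral_sub_mul_sub (hX _ (hb i)) (hX _ (ha i)) (hX _ (hb j)) (hX _ (ha j)),
    integral_sub_mul_sub (hY _ (hb i)) (hY _ (ha i)) (hY _ (hb j)) (hY _ (ha j)),
    hXY _ (hb i) _ (hb j), hXY _ (hb i) _ (ha j), hXY _ (ha i) _ (hb j), hXY _ (ha i) _ (ha j)]

section Beta

variable {p q : ℝ}

lemma ofReal_rpow_mul_one_sub_rpow {x : ℝ} (hx : x ∈ Icc (0 : ℝ) 1) :
    ((x ^ (p - 1) * (1 - x) ^ (q - 1) : ℝ) : ℂ)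
      = (x : ℂ) ^ ((p : ℂ) - 1) * (1 - (x : ℂ)) ^ ((q : ℂ) - 1) := by
  rw [Complex.ofReal_mul, Complex.ofReal_cpow hx.1, Complex.ofReal_cpow (sub_nonneg.2 hx.2)]
  push_cast
  rfl

lemma intervalIntegrable_rpow_mul_one_sub_rpow (hp : 0 < p) (hq : 0 < q) :
    IntervalIntegrable (fun x : ℝ => x ^ (p - 1) * (1 - x) ^ (q - 1)) volume 0 1 := by
  have hC := Complex.betaIntegral_convergent (u := p) (v := q) (by simpa) (by simpa)
  refine (intervalIntegrable_congr fun x hx => ?_).1 hC.norm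
  rw [uIoc_of_le zero_le_one] at hx
  rw [← ofReal_rpow_mul_one_sub_rpow ⟨hx.1.le, hx.2⟩, Complex.norm_real, Real.norm_of_nonneg
    (mul_nonneg (Real.rpow_nonneg hx.1.le _) (Real.rpow_nonneg (sub_nonneg.2 hx.2) _))]

lemma integral_rpow_mul_one_sub_rpow (hp : 0 < p) (hq : 0 < q) :
    ∫ x in (0 : ℝ)..1, x ^ (p - 1) * (1 - x) ^ (q - 1)
      = Real.Gamma p * Real.Gamma q / Real.Gamma (p + q) := by
  have hB := Complex.betaIntegral_eq_Gamma_mul_div p q (by simpa) (by simpa)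
  rw [Complex.betaIntegral, ← intervalIntegral.integral_congr fun x hx =>
    ofReal_rpow_mul_one_sub_rpow (p := p) (q := q) (x := x) (by rwa [uIcc_of_le zero_le_one] at hx),
    intervalIntegral.integral_ofReal, ← Complex.ofReal_add] at hB
  simp only [Complex.Gamma_ofReal] at hB
  exact_mod_cast hB

end Beta

section ShiftedBeta

variable {p q t b : ℝ}

lemma sub_rpow_mul_sub_rpow_affine {x : ℝ} (htb : t < b) (hx : x ∈ Icc (0 : ℝ) 1) :
    ((b - t) * x + t - t) ^ (p - 1) * (b - ((b - t) * x + t)) ^ (q - 1)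
      = (b - t) ^ (p + q - 2) * (x ^ (p - 1) * (1 - x) ^ (q - 1)) := by
  have hc : 0 < b - t := sub_pos.2 htb
  rw [add_sub_cancel_right, show b - ((b - t) * x + t) = (b - t) * (1 - x) by ring,
    Real.mul_rpow hc.le hx.1, Real.mul_rpow hc.le (sub_nonneg.2 hx.2),
    show p + q - 2 = (p - 1) + (q - 1) by ring, Real.rpow_add hc]
  ring

lemma intervalIntegrable_sub_rpow_mul_sub_rpow (hp : 0 < p) (hq : 0 < q) (htb : t < b) :
    IntervalIntegrable (fun s => (s - t) ^ (p - 1) * (b - s) ^ (q - 1)) volume t b := by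
  have hc : b - t ≠ 0 := (sub_pos.2 htb).ne'
  have hI : IntervalIntegrable
      (fun x => ((b - t) * x + t - t) ^ (p - 1) * (b - ((b - t) * x + t)) ^ (q - 1)) volume 0 1 :=
    ((intervalIntegrable_rpow_mul_one_sub_rpow hp hq).const_mul ((b - t) ^ (p + q - 2))).congr
      fun x hx => (sub_rpow_mul_sub_rpow_affine htb (Ioc_subset_Icc_self
        (by rwa [uIoc_of_le zero_le_one] at hx))).symm
  have h := (hI.comp_mul_left (c := (b - t)⁻¹)).comp_sub_right t
  convert h using 1
  · funext s
    field_simp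
    ring_nf
  · simp
  · field_simp
    ring

lemma integral_sub_rpow_mul_sub_rpow (hp : 0 < p) (hq : 0 < q) (htb : t < b) :
    ∫ s in t..b, (s - t) ^ (p - 1) * (b - s) ^ (q - 1)
      = (b - t) ^ (p + q - 1) * (Real.Gamma p * Real.Gamma q / Real.Gamma (p + q)) := by
  have hc : 0 < b - t := sub_pos.2 htb
  have h := intervalIntegral.integral_comp_mul_add
    (fun s => (s - t) ^ (p - 1) * (b - s) ^ (q - 1)) hc.ne' (a := 0) (b := 1) t
  rw [intervalIntegral.integral_congr fun x hx => sub_rpow_mul_sub_rpow_affine htb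
      (by rwa [uIcc_of_le zero_le_one] at hx), intervalIntegral.integral_const_mul,
    integral_rpow_mul_one_sub_rpow hp hq, mul_zero, zero_add, mul_one, sub_add_cancel,
    smul_eq_mul] at h
  rw [eq_inv_mul_iff_mul_eq₀ hc.ne'] at h
  rw [← h, show p + q - 1 = (p + q - 2) + 1 by ring, Real.rpow_add_one hc.ne']
  ring

end ShiftedBeta

noncomputable def liouvilleKernel (α b : ℝ) : ℝ → ℝ :=
  (Ioo 0 b).indicator fun u => (b - u) ^ α

section LiouvilleKernel

variable {α : ℝ}

lemma measurable_liouvilleKernel (b : ℝ) : Measurable (liouvilleKernel α b) :=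
  (by fun_prop : Measurable fun u : ℝ => (b - u) ^ α).indicator measurableSet_Ioo

lemma liouvilleKernel_sq (b u : ℝ) :
    liouvilleKernel α b u ^ 2 = (Ioo 0 b).indicator (fun u => (b - u) ^ (2 * α)) u := by
  by_cases hu : u ∈ Ioo 0 b
  · rw [liouvilleKernel, indicator_of_mem hu, indicator_of_mem hu, ← Real.rpow_natCast,
      ← Real.rpow_mul (sub_pos.2 hu.2).le, mul_comm]
    norm_num
  · rw [liouvilleKernel, indicator_of_notMem hu, indicator_of_notMem hu, sq, mul_zero]

lemma memLp_liouvilleKernel (hα : -1 / 2 < α) (b : ℝ) :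
    MemLp (liouvilleKernel α b) 2 volume := by
  rw [memLp_two_iff_integrable_sq (measurable_liouvilleKernel b).aestronglyMeasurable]
  simp only [liouvilleKernel_sq]
  rw [integrable_indicator_iff measurableSet_Ioo]
  rcases le_or_gt b 0 with hb | hb
  · rw [Ioo_eq_empty (not_lt.2 hb)]
    exact integrableOn_empty
  · have h := (intervalIntegral.intervalIntegrable_rpow' (a := 0) (b := b)
      (by linarith : -1 < 2 * α)).comp_sub_left b
    rw [sub_zero, sub_self] at h
    exact (intervalIntegrable_iff_integrableOn_Ioo_of_le hb.le).1 h.symm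

lemma liouvilleKernel_mul_liouvilleKernel (s t u : ℝ) :
    liouvilleKernel α s u * liouvilleKernel α t u
      = (Ioo 0 (min s t)).indicator (fun u => (s - u) ^ α * (t - u) ^ α) u := by
  rw [liouvilleKernel, liouvilleKernel, ← inter_indicator_mul, Ioo_inter_Ioo, max_self]

lemma setIntegral_liouvilleKernel_mul_liouvilleKernel {s t T : ℝ} (hs : s ≤ T) :
    ∫ u in Ioo 0 T, liouvilleKernel α s u * liouvilleKernel α t u
      = ∫ u in Ioo 0 (min s t), (s - u) ^ α * (t - u) ^ α := by
  simp only [liouvilleKernel_mul_liouvilleKernel]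
  rw [integral_indicator measurableSet_Ioo, Measure.restrict_restrict measurableSet_Ioo,
    inter_eq_self_of_subset_left (Ioo_subset_Ioo_right ((min_le_left s t).trans hs))]

end LiouvilleKernel

section RightFrac

variable {b α t : ℝ}

lemma rightFrac_const_mul (c : ℝ) (f : ℝ → ℝ) :
    rightFrac b α (fun s => c * f s) t = c * rightFrac b α f t := by
  simp only [rightFrac, mul_left_comm _ c, integral_const_mul]

lemma rightFrac_sub {f g : ℝ → ℝ} (hf : IntegrableOn (fun s => (s - t) ^ (α - 1) * f s) (Ioo t b))
    (hg : IntegrableOn (fun s => (s - t) ^ (α - 1) * g s) (Ioo t b)) :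
    rightFrac b α (fun s => f s - g s) t = rightFrac b α f t - rightFrac b α g t := by
  simp only [rightFrac, mul_sub, integral_sub hf hg]

lemma rightFrac_finsetSum {ι : Type*} (I : Finset ι) {f : ι → ℝ → ℝ}
    (hf : ∀ i ∈ I, IntegrableOn (fun s => (s - t) ^ (α - 1) * f i s) (Ioo t b)) :
    rightFrac b α (fun s => ∑ i ∈ I, f i s) t = ∑ i ∈ I, rightFrac b α (f i) t := by
  simp only [rightFrac, Finset.mul_sum, integral_finsetSum I hf]

end RightFrac

section RightFracLiouvilleKernel

variable {p q t b T : ℝ}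

lemma rpow_mul_liouvilleKernel_eqOn (ht : 0 ≤ t) :
    EqOn (fun s => (s - t) ^ (p - 1) * liouvilleKernel (q - 1) b s)
      ((Ioo t b).indicator fun s => (s - t) ^ (p - 1) * (b - s) ^ (q - 1)) (Ioo t T) := by
  intro s hs
  by_cases hsb : s < b
  · have hs0 : s ∈ Ioo 0 b := ⟨ht.trans_lt hs.1, hsb⟩
    have hst : s ∈ Ioo t b := ⟨hs.1, hsb⟩
    simp only [liouvilleKernel]
    rw [indicator_of_mem hs0, indicator_of_mem hst]
  · simp only [liouvilleKernel, indicator_of_notMem (fun h : s ∈ Ioo 0 b => hsb h.2),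
      indicator_of_notMem (fun h : s ∈ Ioo t b => hsb h.2), mul_zero]

lemma integrableOn_rpow_mul_liouvilleKernel (hp : 0 < p) (hq : 0 < q) (ht : 0 ≤ t) :
    IntegrableOn (fun s => (s - t) ^ (p - 1) * liouvilleKernel (q - 1) b s) (Ioo t T) := by
  refine (integrableOn_congr_fun (rpow_mul_liouvilleKernel_eqOn ht) measurableSet_Ioo).2 ?_
  rcases lt_or_ge t b with htb | htb
  · rw [IntegrableOn, integrable_indicator_iff measurableSet_Ioo]
    exact ((intervalIntegrable_iff_integrableOn_Ioo_of_le htb.le).1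
      (intervalIntegrable_sub_rpow_mul_sub_rpow hp hq htb)).restrict
  · rw [Ioo_eq_empty (not_lt.2 htb), indicator_empty]
    exact integrableOn_zero

lemma rightFrac_liouvilleKernel (hp : 0 < p) (hq : 0 < q) (ht : 0 ≤ t) (hbT : b ≤ T) :
    rightFrac T p (liouvilleKernel (q - 1) b) t
      = if t < b then Real.Gamma q / Real.Gamma (p + q) * (b - t) ^ (p + q - 1) else 0 := by
  rw [rightFrac, setIntegral_congr_fun measurableSet_Ioo (rpow_mul_liouvilleKernel_eqOn ht),
    integral_indicator measurableSet_Ioo, Measure.restrict_restrict measurableSet_Ioo,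
    inter_eq_self_of_subset_left (Ioo_subset_Ioo_right hbT)]
  split_ifs with htb
  · rw [← integral_Ioc_eq_integral_Ioo, ← intervalIntegral.integral_of_le htb.le,
      integral_sub_rpow_mul_sub_rpow hp hq htb]
    field_simp [(Real.Gamma_pos_of_pos hp).ne']
  · rw [Ioo_eq_empty htb, Measure.restrict_empty, integral_zero_measure, mul_zero]

end RightFracLiouvilleKernel

/-- The Volterra kernel of Liouville fBm: `W(t) = ∫_0^t fbmKernel β t u dB(u)` for a Brownian
motion `B`. -/
noncomputable def fbmKernel (β b : ℝ) : ℝ → ℝ :=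
  fun u => (Real.Gamma (β + 1/2))⁻¹ * liouvilleKernel (β - 1/2) b u

section FbmKernel

variable {β t b T : ℝ}

lemma memLp_fbmKernel (hβ : 0 < β) (b : ℝ) : MemLp (fbmKernel β b) 2 volume :=
  (memLp_liouvilleKernel (by linarith) b).const_mul _

lemma fbmCov_eq_integral_fbmKernel_mul {s : ℝ} (hs : s ≤ T) (t : ℝ) :
    fbmCov β s t = ∫ u, fbmKernel β s u * fbmKernel β t u ∂msr 0 T := by
  have expand : ∀ u, fbmKernel β s u * fbmKernel β t u
      = (Real.Gamma (β + 1/2) ^ 2)⁻¹ *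
          (liouvilleKernel (β - 1/2) s u * liouvilleKernel (β - 1/2) t u) :=
    fun u => by simp only [fbmKernel]; ring
  simp only [expand]
  rw [msr, integral_const_mul, setIntegral_liouvilleKernel_mul_liouvilleKernel hs, fbmCov]

lemma integrableOn_rpow_mul_fbmKernel (hβ : 0 < β) (hβ' : β < 1/2) (ht : 0 ≤ t) :
    IntegrableOn (fun s => (s - t) ^ (1/2 - β - 1) * fbmKernel β b s) (Ioo t T) := by
  have h := (integrableOn_rpow_mul_liouvilleKernel (b := b) (T := T) (p := 1/2 - β)
    (q := β + 1/2) (by linarith) (by linarith) ht).const_mul (Real.Gamma (β + 1/2))⁻¹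
  rw [show β + 1/2 - 1 = β - 1/2 by ring] at h
  exact IntegrableOn.congr_fun h (fun s _ => by simp only [fbmKernel]; ring) measurableSet_Ioo

lemma rightFrac_fbmKernel (hβ : 0 < β) (hβ' : β < 1/2) (ht : 0 ≤ t) (hbT : b ≤ T) :
    rightFrac T (1/2 - β) (fbmKernel β b) t = if t < b then 1 else 0 := by
  have h := rightFrac_liouvilleKernel (p := 1/2 - β) (q := β + 1/2) (by linarith) (by linarith)
    ht hbT
  rw [show β + 1/2 - 1 = β - 1/2 by ring, show 1/2 - β + (β + 1/2) = 1 by ring,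
    Real.Gamma_one, div_one, sub_self, Real.rpow_zero, mul_one] at h
  unfold fbmKernel
  rw [rightFrac_const_mul, h]
  split_ifs
  · exact inv_mul_cancel₀ (Real.Gamma_pos_of_pos (by linarith)).ne'
  · exact mul_zero _

lemma rightFrac_sum_mul_fbmKernel_sub {ι : Type*} [Fintype ι] (hβ : 0 < β) (hβ' : β < 1/2)
    (ht : 0 ≤ t) (c : ι → ℝ) {A B : ι → ℝ} (hA : ∀ j, A j ≤ T) (hB : ∀ j, B j ≤ T) :
    rightFrac T (1/2 - β) (fun s => ∑ j, c j * (fbmKernel β (B j) s - fbmKernel β (A j) s)) t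
      = ∑ j, c j * ((if t < B j then 1 else 0) - (if t < A j then 1 else 0)) := by
  have hK : ∀ b, IntegrableOn (fun s => (s - t) ^ (1/2 - β - 1) * fbmKernel β b s) (Ioo t T) :=
    fun b => integrableOn_rpow_mul_fbmKernel hβ hβ' ht
  rw [rightFrac_finsetSum]
  · refine Finset.sum_congr rfl fun j _ => ?_
    rw [rightFrac_const_mul, rightFrac_sub (hK _) (hK _), rightFrac_fbmKernel hβ hβ' ht (hB j),
      rightFrac_fbmKernel hβ hβ' ht (hA j)]
  · intro j _
    refine IntegrableOn.congr_fun (((hK (B j)).sub (hK (A j))).const_mul (c j))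
      (fun s _ => ?_) measurableSet_Ioo
    simp only [Pi.sub_apply]
    ring

end FbmKernel

lemma indicator_Ioc_one_eq_ite_sub_ite {a b t : ℝ} (hab : a ≤ b) (hta : t ≠ a) (htb : t ≠ b) :
    (Ioc a b).indicator (fun _ => (1 : ℝ)) t
      = (if t < b then 1 else 0) - (if t < a then 1 else 0) := by
  have := lt_or_gt_of_ne hta
  have := lt_or_gt_of_ne htb
  simp only [indicator_apply, mem_Ioc]
  split_ifs <;> grind

theorem ito_isometry_liouville_fbm_small_hurst_general
    {Ω : Type*} [MeasurableSpace Ω] (P : Measure Ω)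
    (T β : ℝ) (hβ : 0 < β) (hβ' : β < 1/2)
    (W : ℝ → Ω → ℝ)
    (hW2 : ∀ t ∈ Icc (0 : ℝ) T, MemLp (W t) 2 P)
    (hWcov : ∀ s ∈ Icc (0 : ℝ) T, ∀ t ∈ Icc (0 : ℝ) T,
      ∫ ω, W s ω * W t ω ∂P = fbmCov β s t)
    (N : ℕ) (A B c : Fin N → ℝ)
    (hAB : ∀ j, 0 ≤ A j ∧ A j < B j ∧ B j ≤ T) :
    let g : ℝ → ℝ := fun s => (Real.Gamma (β + 1/2))⁻¹ * ∑ j, c j *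
      ((Ioo 0 (B j)).indicator (fun s => (B j - s) ^ (β - 1/2)) s -
       (Ioo 0 (A j)).indicator (fun s => (A j - s) ^ (β - 1/2)) s)
    MemLp g 2 (msr 0 T) ∧
    (fun s => ∑ j, c j * (Ioc (A j) (B j)).indicator (fun _ => (1 : ℝ)) s)
      =ᵐ[msr 0 T] rightFrac T (1/2 - β) g ∧
    ∫ ω, (∑ j, c j * (W (B j) ω - W (A j) ω)) ^ 2 ∂P = ∫ s in Ioo 0 T, (g s) ^ 2 := by
  intro g
  have hg : g = fun s => ∑ j, c j * (fbmKernel β (B j) s - fbmKernel β (A j) s) := by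
    funext s
    simp only [g, fbmKernel, liouvilleKernel, Finset.mul_sum]
    exact Finset.sum_congr rfl fun j _ => by ring
  have hA : ∀ j, A j ∈ Icc 0 T := fun j => ⟨(hAB j).1, (hAB j).2.1.le.trans (hAB j).2.2⟩
  have hB : ∀ j, B j ∈ Icc 0 T := fun j => ⟨(hAB j).1.trans (hAB j).2.1.le, (hAB j).2.2⟩
  have hK : ∀ b, MemLp (fbmKernel β b) 2 (msr 0 T) := fun b => (memLp_fbmKernel hβ b).restrict _
  rw [hg]
  refine ⟨memLp_finsetSum _ fun j _ => ((hK _).sub (hK _)).const_mul (c j), ?_,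
    integral_sq_sum_sub_eq_of_integral_mul_eq hW2 (fun s _ => hK s)
      (fun s hs t ht => (hWcov s hs t ht).trans (fbmCov_eq_integral_fbmKernel_mul hs.2 t)) hA hB c⟩
  filter_upwards [ae_restrict_mem measurableSet_Ioo,
    ((finite_range A).union (finite_range B)).countable.ae_notMem (volume.restrict (Ioo 0 T))]
    with t ht htAB
  rw [rightFrac_sum_mul_fbmKernel_sub hβ hβ' ht.1.le c (fun j => (hA j).2) (fun j => (hB j).2)]
  refine Finset.sum_congr rfl fun j _ => ?_
  rw [indicator_Ioc_one_eq_ite_sub_ite (hAB j).2.1.le (fun h => htAB (Or.inl ⟨j, h.symm⟩))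
    (fun h => htAB (Or.inr ⟨j, h.symm⟩))]

theorem ito_isometry_liouville_fbm_small_hurst
    {Ω : Type*} [MeasurableSpace Ω] (P : Measure Ω) [IsProbabilityMeasure P]
    (T β : ℝ) (hT : 0 < T) (hβ : 0 < β) (hβ' : β < 1/2)
    (W : ℝ → Ω → ℝ)
    (hW2 : ∀ t ∈ Icc (0 : ℝ) T, MemLp (W t) 2 P)
    (hWmean : ∀ t ∈ Icc (0 : ℝ) T, ∫ ω, W t ω ∂P = 0)
    (hWcov : ∀ s ∈ Icc (0 : ℝ) T, ∀ t ∈ Icc (0 : ℝ) T,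
      ∫ ω, W s ω * W t ω ∂P = fbmCov β s t)
    (N : ℕ) (A B c : Fin N → ℝ)
    (hAB : ∀ j, 0 ≤ A j ∧ A j < B j ∧ B j ≤ T)
    (hdisj : Pairwise fun i j => Disjoint (Ioc (A i) (B i)) (Ioc (A j) (B j))) :
    let g : ℝ → ℝ := fun s => (Real.Gamma (β + 1/2))⁻¹ * ∑ j, c j *
      ((Ioo 0 (B j)).indicator (fun s => (B j - s) ^ (β - 1/2)) s -
       (Ioo 0 (A j)).indicator (fun s => (A j - s) ^ (β - 1/2)) s)
    MemLp g 2 (msr 0 T) ∧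
    (fun s => ∑ j, c j * (Ioc (A j) (B j)).indicator (fun _ => (1 : ℝ)) s)
      =ᵐ[msr 0 T] rightFrac T (1/2 - β) g ∧
    ∫ ω, (∑ j, c j * (W (B j) ω - W (A j) ω)) ^ 2 ∂P = ∫ s in Ioo 0 T, (g s) ^ 2 :=
  ito_isometry_liouville_fbm_small_hurst_general P T β hβ hβ' W hW2 hWcov N A B c hAB
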